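/- For every percolation configuration, τ = inf{m ≥ 0 : ℓ̲_m > ū_m}. -/

import Mathlib

open MeasureTheory ProbabilityTheory Filter Topology Set
open scoped ENNReal

abbrev Config := (ℤ × ℤ) → Bool

/-- Membership in the rotated lattice L. -/
def lat (z : ℤ × ℤ) : Prop := 0 ≤ z.1 ∧ Even (z.1 + z.2)

/-- Allowed steps of the rotated oriented percolation model. -/
def rotStep (d : ℤ × ℤ) : Prop := d = (1, 1) ∨ d = (2, 0) ∨ d = (1, -1)

/-- `conn ω x y` : there is a directed path from `x` to `y` in `L`, all of whose
points except possibly the last are open. -/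
def conn (ω : Config) (x y : ℤ × ℤ) : Prop :=
  ∃ (k : ℕ) (c : ℕ → ℤ × ℤ), c 0 = x ∧ c k = y ∧ (∀ i ≤ k, lat (c i)) ∧
    (∀ i < k, rotStep (c (i + 1) - c i)) ∧ (∀ i < k, ω (c i) = true)

def cluster (ω : Config) (x : ℤ × ℤ) : Set (ℤ × ℤ) := {y | conn ω x y}

def OmegaInf : Set Config := {ω | (cluster ω (0, 0)).Infinite}

noncomputable def supZ (S : Set ℤ) : EReal := sSup ((fun x : ℤ => ((x : ℝ) : EReal)) '' S)
noncomputable def infZ (S : Set ℤ) : EReal := sInf ((fun x : ℤ => ((x : ℝ) : EReal)) '' S)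

def xi (ω : Config) (n : ℕ) : Set ℤ := {x | conn ω (0, 0) ((n : ℤ), x)}
noncomputable def uSeq (ω : Config) (n : ℕ) : EReal := supZ (xi ω n)
noncomputable def lSeq (ω : Config) (n : ℕ) : EReal := infZ (xi ω n)

def xibar (ω : Config) (n : ℕ) : Set ℤ :=
  {x | ∃ y : ℤ, y ≤ 0 ∧ (conn ω (0, y) ((n : ℤ), x) ∨ conn ω (1, y) ((n : ℤ), x))}
noncomputable def ubar (ω : Config) (n : ℕ) : EReal :=
  if n = 0 then 0 else supZ (xibar ω n)

def xiunder (ω : Config) (n : ℕ) : Set ℤ :=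
  {x | ∃ y : ℤ, 0 ≤ y ∧ (conn ω (0, y) ((n : ℤ), x) ∨ conn ω (1, y) ((n : ℤ), x))}
noncomputable def lunder (ω : Config) (n : ℕ) : EReal :=
  if n = 0 then 0 else infZ (xiunder ω n)

noncomputable def ubarSeg (ω : Config) (m n : ℕ) : EReal :=
  sSup {e : EReal | ∃ x y : ℤ, ((y : ℝ) : EReal) ≤ ubar ω m ∧
    (conn ω ((m : ℤ), y) ((n : ℤ), x) ∨ conn ω ((m : ℤ) + 1, y) ((n : ℤ), x)) ∧
    e = ((x : ℝ) : EReal) - ubar ω m}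

/-- `P` is the Bernoulli(`p`) product measure on site configurations. -/
def IsBernoulli (p : ℝ) (P : Measure Config) : Prop :=
  IsProbabilityMeasure P ∧
  ∀ (s : Finset (ℤ × ℤ)) (f : (ℤ × ℤ) → Bool),
    P {ω : Config | ∀ z ∈ s, ω z = f z} =
      ∏ z ∈ s, ENNReal.ofReal (if f z then p else 1 - p)

/-- the nonnegative part of an extended real, as an element of `ℝ≥0∞`. -/
noncomputable def nnpart (x : EReal) : ℝ≥0∞ := (max x 0).abs

/-- `E_p[ū_n]`, as an extended real (`ū_n ≤ n`, so this is `n - E[n - ū_n]`). -/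
noncomputable def Eubar (P : Measure Config) (n : ℕ) : EReal :=
  (n : EReal) - ((∫⁻ ω, nnpart ((n : EReal) - ubar ω n) ∂P : ℝ≥0∞) : EReal)

/-- `α[p] = inf_{n ≥ 1} E_p[ū_n]/n`. -/
noncomputable def alphaVal (P : Measure Config) : EReal :=
  ⨅ n : ℕ, Eubar P (n + 1) / ((n + 1 : ℕ) : EReal)

/-- `ξ_n^A` : sites at level `n` reachable from `{0} × A`. -/
def xiA (ω : Config) (A : Set ℤ) (n : ℕ) : Set ℤ :=
  {x | ∃ y ∈ A, lat (0, y) ∧ conn ω (0, y) ((n : ℤ), x)}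

/-- `τ^A = inf{n ≥ 0 : ξ_n^A = ∅}`, as an extended natural number. -/
noncomputable def tauA (ω : Config) (A : Set ℤ) : ℕ∞ :=
  sInf {c : ℕ∞ | ∃ n : ℕ, c = (n : ℕ∞) ∧ xiA ω A n = ∅}

/-!
If `ū_m < ℓ̲_m` then `ξ_m` is empty, because `ξ_m ⊆ ξ̄_m ∩ ξ̲_m`. Conversely, let `n + 1 = τ` and
pick `z ∈ ξ_n`. A path from `{0, 1} × [0, ∞)` to level `n + 1` which at level `n` is not to the
right of `z` crosses the path from the origin to `z`; continued from the crossing point it would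
reach level `n + 1` from the origin. So it ends strictly to the right of `z`, and by reflection
every path from `{0, 1} × (-∞, 0]` ends strictly to the left of `z`: `ū_{n+1} < z < ℓ̲_{n+1}`.

To find crossings, paths are parametrised by level, a `(2, 0)` step passing through a midpoint
which is not a site of `L`; two such paths cannot cross without meeting.
-/

theorem sInf_setOf_eq_of_forall_exists_le {α : Type*} [CompleteLattice α] {g : ℕ → α}
    (hg : Monotone g) {P Q : ℕ → Prop} (hQP : ∀ n, Q n → P n) (hPQ : ∀ n, P n → ∃ m ≤ n, Q m) :
    sInf {c | ∃ n, c = g n ∧ P n} = sInf {c | ∃ n, c = g n ∧ Q n} := by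
  apply le_antisymm
  · refine le_sInf ?_
    rintro _ ⟨m, rfl, hQ⟩
    apply sInf_le
    exact ⟨m, rfl, hQP m hQ⟩
  · refine le_sInf ?_
    rintro _ ⟨n, rfl, hP⟩
    obtain ⟨m, hmn, hQ⟩ := hPQ n hP
    refine (sInf_le ?_).trans (hg hmn)
    exact ⟨m, rfl, hQ⟩

theorem le_supZ {S : Set ℤ} {x : ℤ} (hx : x ∈ S) : ((x : ℝ) : EReal) ≤ supZ S :=
  le_sSup ⟨x, hx, rfl⟩

theorem infZ_le {S : Set ℤ} {x : ℤ} (hx : x ∈ S) : infZ S ≤ ((x : ℝ) : EReal) :=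
  sInf_le ⟨x, hx, rfl⟩

theorem supZ_le {S : Set ℤ} {b : ℤ} (h : ∀ x ∈ S, x ≤ b) : supZ S ≤ ((b : ℝ) : EReal) :=
  sSup_le <| by rintro _ ⟨x, hx, rfl⟩; exact EReal.coe_le_coe_iff.2 (Int.cast_le.2 (h x hx))

theorem le_infZ {S : Set ℤ} {b : ℤ} (h : ∀ x ∈ S, b ≤ x) : ((b : ℝ) : EReal) ≤ infZ S :=
  le_sInf <| by rintro _ ⟨x, hx, rfl⟩; exact EReal.coe_le_coe_iff.2 (Int.cast_le.2 (h x hx))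

section Paths

variable {ω : Config}

theorem conn_refl (ω : Config) {x : ℤ × ℤ} (hx : lat x) : conn ω x x :=
  ⟨0, fun _ => x, rfl, rfl, fun _ _ => hx, fun _ h => absurd h (Nat.not_lt_zero _),
    fun _ h => absurd h (Nat.not_lt_zero _)⟩

theorem conn.snoc {x y z : ℤ × ℤ} (h : conn ω x y) (hy : ω y = true) (hz : lat z)
    (hyz : rotStep (z - y)) : conn ω x z := by
  obtain ⟨k, c, hc0, hck, hlat, hstep, hopen⟩ := h
  refine ⟨k + 1, fun i => if i ≤ k then c i else z, by simp [hc0], by simp, ?_, ?_, ?_⟩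
  · intro i hi
    dsimp only
    split_ifs with hik
    exacts [hlat i hik, hz]
  · intro i hi
    obtain hik | rfl := Nat.lt_or_eq_of_le (Nat.le_of_lt_succ hi)
    · simpa [hik.le, Nat.succ_le_of_lt hik] using hstep i hik
    · simpa [hck] using hyz
  · intro i hi
    obtain hik | rfl := Nat.lt_or_eq_of_le (Nat.le_of_lt_succ hi)
    · simpa [hik.le] using hopen i hik
    · simpa [hck] using hy

/-- A step of a path parametrised by level: from `(i, u)` to `(i + 1, v)`. Points `(i, u)` with
`i + u` odd are not sites of `L`; they stand for the midpoint of a `(2, 0)` step. -/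
structure LevelStep (ω : Config) (i : ℕ) (u v : ℤ) : Prop where
  abs_sub_le : |v - u| ≤ 1
  open_of_even : Even ((i : ℤ) + u) → ω (i, u) = true
  eq_of_not_even : ¬ Even ((i : ℤ) + u) → v = u

structure LevelPath (ω : Config) (a b : ℕ) (f : ℕ → ℤ) : Prop where
  le : a ≤ b
  even_start : Even ((a : ℤ) + f a)
  even_end : Even ((b : ℤ) + f b)
  step : ∀ i, a ≤ i → i < b → LevelStep ω i (f i) (f (i + 1))

-- At adjacent positions one of the two points is not a site, and there its path is flat.
theorem LevelStep.le_of_lt {i : ℕ} {u v u' v' : ℤ} (h : LevelStep ω i u v)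
    (h' : LevelStep ω i u' v') (hu : u < u') : v ≤ v' := by
  by_contra! hv
  have hd := abs_le.mp h.abs_sub_le
  have hd' := abs_le.mp h'.abs_sub_le
  by_cases he : Even ((i : ℤ) + u)
  · have := h'.eq_of_not_even (by rw [Int.even_iff] at he; rw [Int.not_even_iff]; omega)
    omega
  · have := h.eq_of_not_even he
    omega

theorem exists_eq_of_levelStep {f g : ℕ → ℤ} {a b : ℕ} (hab : a ≤ b)
    (hf : ∀ i, a ≤ i → i < b → LevelStep ω i (f i) (f (i + 1)))
    (hg : ∀ i, a ≤ i → i < b → LevelStep ω i (g i) (g (i + 1)))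
    (ha : f a ≤ g a) (hb : g b ≤ f b) : ∃ t, a ≤ t ∧ t ≤ b ∧ f t = g t := by
  induction b, hab using Nat.le_induction with
  | base => exact ⟨a, le_rfl, le_rfl, le_antisymm ha hb⟩
  | succ b hab ih =>
    by_cases hgf : g b ≤ f b
    · obtain ⟨t, hat, htb, ht⟩ := ih (fun i hi hib => hf i hi (by omega))
        (fun i hi hib => hg i hi (by omega)) hgf
      exact ⟨t, hat, by omega, ht⟩
    · have := (hf b hab b.lt_succ_self).le_of_lt (hg b hab b.lt_succ_self) (not_le.mp hgf)
      exact ⟨b + 1, by omega, le_rfl, le_antisymm this hb⟩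

namespace LevelPath

variable {a b : ℕ} {f : ℕ → ℤ}

theorem restrict (h : LevelPath ω a b f) {c : ℕ} (hac : a ≤ c) (hcb : c ≤ b)
    (hc : Even ((c : ℤ) + f c)) : LevelPath ω a c f :=
  ⟨hac, h.even_start, hc, fun i hai hic => h.step i hai (by omega)⟩

theorem splice {c d t : ℕ} {g : ℕ → ℤ} (hf : LevelPath ω a b f) (hg : LevelPath ω c d g)
    (hat : a ≤ t) (htb : t ≤ b) (hct : c ≤ t) (htd : t ≤ d) (hfg : f t = g t) :
    LevelPath ω a d (fun i => if i ≤ t then f i else g i) := by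
  have hgt : ∀ i, t ≤ i → (if i ≤ t then f i else g i) = g i := by
    intro i hti
    split_ifs with hit
    · rw [le_antisymm hit hti, hfg]
    · rfl
  refine ⟨by omega, by simpa [hat] using hf.even_start, by simpa [hgt d htd] using hg.even_end,
    ?_⟩
  intro i hai hid
  by_cases hit : i < t
  · simpa [hit.le, Nat.succ_le_of_lt hit] using hf.step i hai (by omega)
  · rw [hgt i (by omega), hgt (i + 1) (by omega)]
    exact hg.step i (by omega) hid

theorem conn (h : LevelPath ω a b f) : _root_.conn ω (a, f a) (b, f b) := by
  induction b using Nat.strong_induction_on with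
  | _ b ih =>
  obtain rfl | hab := h.le.eq_or_lt
  · exact conn_refl ω ⟨by positivity, h.even_start⟩
  obtain ⟨b, rfl⟩ := Nat.exists_eq_add_one_of_ne_zero (by omega : b ≠ 0)
  have hend : lat ((b + 1 : ℕ), f (b + 1)) := ⟨by positivity, h.even_end⟩
  have hb := h.step b (by omega) b.lt_succ_self
  by_cases he : Even ((b : ℤ) + f b)
  · refine (ih b b.lt_succ_self (h.restrict (by omega) b.le_succ he)).snoc
      (hb.open_of_even he) hend ?_
    have := abs_le.mp hb.abs_sub_le
    have hend' := Int.even_iff.mp h.even_end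
    rw [Int.even_iff] at he
    simp only [rotStep, Prod.ext_iff, Prod.fst_sub, Prod.snd_sub]
    push_cast at hend' ⊢
    omega
  -- the odd point `(b, f b)` is the midpoint of a `(2, 0)` step from `(b - 1, f b)`
  have hflat := hb.eq_of_not_even he
  have hab' : a < b := lt_of_le_of_ne (by omega) fun hab => he (hab ▸ h.even_start)
  obtain ⟨c, rfl⟩ := Nat.exists_eq_add_one_of_ne_zero (by omega : b ≠ 0)
  have hc := h.step c (by omega) (by omega)
  rw [Int.not_even_iff] at he
  have hfc : f (c + 1) = f c := by
    by_contra hne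
    have := abs_le.mp hc.abs_sub_le
    exact hne (hc.eq_of_not_even (by rw [Int.not_even_iff]; push_cast at he; omega))
  have hce : Even ((c : ℤ) + f c) := by rw [Int.even_iff]; push_cast at he; omega
  refine (ih c (by omega) (h.restrict (by omega) (by omega) hce)).snoc
    (hc.open_of_even hce) hend ?_
  simp only [rotStep, Prod.ext_iff, Prod.fst_sub, Prod.snd_sub]
  push_cast
  omega

theorem exists_snoc (h : LevelPath ω a b f) (hb : ω (b, f b) = true) {b' : ℕ} {y : ℤ}
    (hd : rotStep (((b' : ℤ), y) - ((b : ℤ), f b))) :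
    ∃ g, LevelPath ω a b' g ∧ g a = f a ∧ g b' = y := by
  have hend := h.even_end
  rw [Int.even_iff] at hend
  simp only [rotStep, Prod.mk_sub_mk, Prod.mk.injEq] at hd
  have hbb' : b < b' := by omega
  refine ⟨fun i => if i ≤ b then f i else y, ⟨h.le.trans hbb'.le,
    by simpa [h.le] using h.even_start, by simp only [hbb'.not_ge, if_false, Int.even_iff]; omega,
    ?_⟩, by simp [h.le], by simp [hbb'.not_ge]⟩
  intro i hai hib'
  obtain hib | rfl | hib := lt_trichotomy i b
  · simpa [hib.le, Nat.succ_le_of_lt hib] using h.step i hai hib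
  · simp only [le_refl, if_true, Nat.not_succ_le_self, if_false]
    exact ⟨abs_le.mpr (by omega), fun _ => hb, fun he => absurd (Int.even_iff.mpr hend) he⟩
  · -- only a `(2, 0)` step reaches beyond `b + 1`
    have hi : i = b + 1 := by omega
    have hy : y = f b := by omega
    simp only [hib.not_ge, (Nat.lt_succ_of_lt hib).not_ge, if_false]
    refine ⟨by simp, fun he => ?_, fun _ => rfl⟩
    rw [Int.even_iff] at he
    omega

end LevelPath

theorem exists_levelPath_of_conn {a b : ℕ} {u v : ℤ} (h : conn ω (a, u) (b, v)) :
    ∃ f, f a = u ∧ f b = v ∧ LevelPath ω a b f := by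
  obtain ⟨k, c, hc0, hck, hlat, hstep, hopen⟩ := h
  suffices ∀ j ≤ k,
      ∃ f, f a = u ∧ f (c j).1.toNat = (c j).2 ∧ LevelPath ω a (c j).1.toNat f by
    simpa [hck] using this k le_rfl
  intro j hj
  induction j with
  | zero =>
    refine ⟨fun _ => u, rfl, by simp [hc0], ⟨by simp [hc0], ?_, ?_, ?_⟩⟩
    · simpa [hc0] using (hlat 0 hj).2
    · simpa [hc0] using (hlat 0 hj).2
    · simp only [hc0]
      omega
  | succ j ih =>
    obtain ⟨f, hfa, hfj, hf⟩ := ih (by omega)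
    have hcj : ((c j).1.toNat : ℤ) = (c j).1 := Int.toNat_of_nonneg (hlat j (by omega)).1
    have hcj' : ((c (j + 1)).1.toNat : ℤ) = (c (j + 1)).1 :=
      Int.toNat_of_nonneg (hlat (j + 1) hj).1
    obtain ⟨g, hg, hga, hgj⟩ := hf.exists_snoc (b' := (c (j + 1)).1.toNat) (y := (c (j + 1)).2)
      (by simpa [hcj, hfj] using hopen j hj) (by simpa [hcj, hcj', hfj] using hstep j hj)
    exact ⟨g, hga.trans hfa, hgj, hg⟩

end Paths

section Percolation

variable {ω : Config} {n : ℕ} {x z : ℤ}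

def reflectConfig (ω : Config) : Config := fun p => ω (p.1, -p.2)

theorem reflectConfig_reflectConfig (ω : Config) : reflectConfig (reflectConfig ω) = ω := by
  funext p
  simp [reflectConfig]

theorem conn.reflect {a b u v : ℤ} (h : conn ω (a, u) (b, v)) :
    conn (reflectConfig ω) (a, -u) (b, -v) := by
  obtain ⟨k, c, hc0, hck, hlat, hstep, hopen⟩ := h
  refine ⟨k, fun i => ((c i).1, -(c i).2), by simp [hc0], by simp [hck], fun i hi => ?_,
    fun i hi => ?_, fun i hi => by simpa [reflectConfig] using hopen i hi⟩
  · simpa [lat, Int.even_add] using hlat i hi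
  · simp only [rotStep, Prod.ext_iff, Prod.fst_sub, Prod.snd_sub] at hstep ⊢
    have := hstep i hi
    omega

theorem neg_mem_xi_reflectConfig (hz : z ∈ xi ω n) : -z ∈ xi (reflectConfig ω) n := by
  simpa [xi] using conn.reflect (show conn ω (0, 0) (n, z) from hz)

theorem xi_reflectConfig_eq_empty (h : xi ω n = ∅) : xi (reflectConfig ω) n = ∅ :=
  eq_empty_of_forall_notMem fun w hw => by
    simpa [reflectConfig_reflectConfig, h] using neg_mem_xi_reflectConfig hw

theorem neg_mem_xiunder_reflectConfig (hx : x ∈ xibar ω n) :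
    -x ∈ xiunder (reflectConfig ω) n := by
  obtain ⟨y, hy, hc | hc⟩ := hx
  exacts [⟨-y, by omega, Or.inl hc.reflect⟩, ⟨-y, by omega, Or.inr hc.reflect⟩]

theorem exists_levelPath_of_mem_xi (hz : z ∈ xi ω n) :
    ∃ f, f 0 = 0 ∧ f n = z ∧ LevelPath ω 0 n f :=
  exists_levelPath_of_conn (a := 0) (by simpa [xi] using hz)

theorem exists_levelPath_of_mem_xiunder (hx : x ∈ xiunder ω n) :
    ∃ s f, s ≤ 1 ∧ 0 ≤ f s ∧ f n = x ∧ LevelPath ω s n f := by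
  obtain ⟨y, hy, hc | hc⟩ := hx
  · obtain ⟨f, hf0, hfn, hf⟩ := exists_levelPath_of_conn (a := 0) (by simpa using hc)
    exact ⟨0, f, zero_le_one, hf0 ▸ hy, hfn, hf⟩
  · obtain ⟨f, hf1, hfn, hf⟩ := exists_levelPath_of_conn (a := 1) (by simpa using hc)
    exact ⟨1, f, le_rfl, hf1 ▸ hy, hfn, hf⟩

theorem lt_of_mem_xi_of_mem_xiunder (hempty : xi ω (n + 1) = ∅) (hz : z ∈ xi ω n)
    (hx : x ∈ xiunder ω (n + 1)) : z < x := by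
  obtain ⟨σ, hσ0, rfl, hσ⟩ := exists_levelPath_of_mem_xi hz
  obtain ⟨s, ρ, hs, hρs, rfl, hρ⟩ := exists_levelPath_of_mem_xiunder hx
  have hσn := Int.even_iff.mp hσ.even_end
  have hρn := Int.even_iff.mp hρ.even_end
  have hρs' := Int.even_iff.mp hρ.even_start
  push_cast at hρn
  rcases Nat.lt_or_ge n s with hns | hsn
  · obtain rfl : n = 0 := by omega
    obtain rfl : s = 1 := by omega
    simp only [Nat.cast_zero, zero_add, Nat.cast_one] at hρn hρs' ⊢
    rw [hσ0]
    omega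
  have hstart : σ s ≤ ρ s := by
    rcases Nat.le_one_iff_eq_zero_or_eq_one.mp hs with rfl | rfl
    · omega
    · have := abs_le.mp (hσ.step 0 le_rfl (by omega)).abs_sub_le
      simp only [zero_add, hσ0, Nat.cast_one] at this hρs'
      omega
  by_cases hcross : ρ n ≤ σ n
  · obtain ⟨t, hst, htn, ht⟩ := exists_eq_of_levelStep hsn
      (fun i _ hin => hσ.step i (Nat.zero_le i) hin) (fun i hsi hin => hρ.step i hsi (by omega))
      hstart hcross
    have hpath := (hσ.splice hρ (Nat.zero_le t) htn hst (by omega) ht).conn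
    have hmem : ρ (n + 1) ∈ xi ω (n + 1) := by
      simpa [xi, hσ0, show ¬n + 1 ≤ t by omega] using hpath
    simp [hempty] at hmem
  · have := abs_le.mp (hρ.step n hsn n.lt_succ_self).abs_sub_le
    omega

theorem lt_of_mem_xibar_of_mem_xi (hempty : xi ω (n + 1) = ∅) (hz : z ∈ xi ω n)
    (hx : x ∈ xibar ω (n + 1)) : x < z := by
  have := lt_of_mem_xi_of_mem_xiunder (xi_reflectConfig_eq_empty hempty)
    (neg_mem_xi_reflectConfig hz) (neg_mem_xiunder_reflectConfig hx)
  omega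

theorem ubar_lt_lunder_of_xi_eq_empty (hempty : xi ω (n + 1) = ∅) (hz : z ∈ xi ω n) :
    ubar ω (n + 1) < lunder ω (n + 1) := by
  rw [ubar, lunder, if_neg n.succ_ne_zero, if_neg n.succ_ne_zero]
  calc supZ (xibar ω (n + 1)) ≤ ((z - 1 : ℤ) : ℝ) :=
        supZ_le fun x hx => by have := lt_of_mem_xibar_of_mem_xi hempty hz hx; omega
    _ < ((z + 1 : ℤ) : ℝ) := by exact_mod_cast (by omega : z - 1 < z + 1)
    _ ≤ infZ (xiunder ω (n + 1)) :=
        le_infZ fun x hx => by have := lt_of_mem_xi_of_mem_xiunder hempty hz hx; omega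

theorem xi_eq_empty_of_ubar_lt_lunder (h : ubar ω n < lunder ω n) : xi ω n = ∅ := by
  rcases eq_or_ne n 0 with rfl | hn
  · simp [ubar, lunder] at h
  rw [ubar, lunder, if_neg hn, if_neg hn] at h
  exact eq_empty_of_forall_notMem fun x hx =>
    (h.trans_le (infZ_le ⟨0, le_rfl, Or.inl hx⟩)).not_ge (le_supZ ⟨0, le_rfl, Or.inl hx⟩)

theorem zero_mem_xi_zero (ω : Config) : (0 : ℤ) ∈ xi ω 0 := by
  simpa [xi] using conn_refl ω (x := (0, 0)) ⟨le_rfl, by simp⟩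

theorem exists_le_ubar_lt_lunder (h : xi ω n = ∅) : ∃ m ≤ n, ubar ω m < lunder ω m := by
  classical
  have hex : ∃ k, xi ω k = ∅ := ⟨n, h⟩
  obtain ⟨k, hk⟩ : ∃ k, Nat.find hex = k + 1 := Nat.exists_eq_succ_of_ne_zero fun h0 => by
    simpa [h0 ▸ Nat.find_spec hex] using zero_mem_xi_zero ω
  obtain ⟨z, hz⟩ := nonempty_iff_ne_empty.2 (Nat.find_min hex (by omega : k < Nat.find hex))
  exact ⟨k + 1, hk ▸ Nat.find_min' hex h,
    ubar_lt_lunder_of_xi_eq_empty (hk ▸ Nat.find_spec hex) hz⟩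

theorem xiA_singleton_zero (ω : Config) (n : ℕ) : xiA ω {0} n = xi ω n := by
  ext x
  simp [xiA, xi, lat]

end Percolation

/-- For every configuration, `τ = inf{m ≥ 0 : ℓ̲_m > ū_m}`. -/
theorem stmt_5 (ω : Config) :
    tauA ω {0} = sInf {c : ℕ∞ | ∃ m : ℕ, c = (m : ℕ∞) ∧ ubar ω m < lunder ω m} := by
  simp only [tauA, xiA_singleton_zero]
  exact sInf_setOf_eq_of_forall_exists_le Nat.mono_cast
    (fun _ => xi_eq_empty_of_ubar_lt_lunder) (fun _ => exists_le_ubar_lt_lunder)
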